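/- Let G be a bipartite constraint graph with order ≺ and β : V → {1,2}. If u,v,w ∈ V satisfy u ≠ v, u ≺ w and v ≺ w, and δ(u,w) and δ(v,w) are both finite, then δ(u,v) is finite and δ(u,v) + δ(u,w) + δ(v,w) is an even number. -/
import Mathlib


namespace CountingCSP

/-! ## The basic framework

An instance `Ψ` of `{1,2}`-CSP is modelled by a number `m` of variables, the variable set
being `Fin m` with its natural linear order `<` (the order of quantification `≺`), a function
`β : Fin m → ℕ` taking values in `{1,2}` (variable `v` is quantified by `∃^{≥ β v}`), and a
simple graph `G` on `Fin m` (the constraint graph).  A target graph is a type `B` together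
with an adjacency relation `E : B → B → Prop` (loops allowed in general). -/

/-- Adjacency of the finite path `P_n` on the vertices `{1,…,n}`, modelled as `Fin n`. -/
def pathAdj (n : ℕ) (i j : Fin n) : Prop :=
  (i : ℕ) + 1 = j ∨ (j : ℕ) + 1 = i

/-- Adjacency of the infinite path `P_∞` on `ℤ`: `i` and `j` adjacent iff `|i - j| = 1`. -/
def intPathAdj (i j : ℤ) : Prop := |i - j| = 1

/-- `SatFrom β G E i f` : processing the variables of the instance in `≺`-increasing order
starting from variable `i`, where the earlier variables have been assigned according to `f`,
the instance can be satisfied.  At each variable `v` one asks for a set `S` of `β v` distinct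
elements of the target such that for every `b ∈ S` the rest of the instance can be satisfied
with `v ↦ b`; when all variables are assigned, the assignment must be a homomorphism. -/
def SatFrom {m : ℕ} {B : Type*} (β : Fin m → ℕ) (G : SimpleGraph (Fin m))
    (E : B → B → Prop) (i : ℕ) (f : Fin m → B) : Prop :=
  if h : i < m then
    ∃ S : Finset B, S.card = β ⟨i, h⟩ ∧
      ∀ b ∈ S, SatFrom β G E (i + 1) (Function.update f ⟨i, h⟩ b)
  else ∀ u v : Fin m, G.Adj u v → E (f u) (f v)
termination_by m - i
decreasing_by omega

/-- `Sat β G E` : the instance with quantifiers `β` and constraint graph `G` is satisfied by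
the target graph with adjacency `E`  (i.e. `H ⊨ Ψ`).  The initial assignment is irrelevant
since every variable is assigned before it is used. -/
def Sat {m : ℕ} {B : Type*} (β : Fin m → ℕ) (G : SimpleGraph (Fin m))
    (E : B → B → Prop) : Prop :=
  ∀ f : Fin m → B, SatFrom β G E 0 f

/-- A graph is bipartite iff it has a proper 2-colouring. -/
def Bipartite {V : Type*} (G : SimpleGraph V) : Prop :=
  ∃ c : V → Bool, ∀ u v, G.Adj u v → c u ≠ c v

/-! ## Walks, looping walks, and the distance function δ -/

/-- `λ(Q) = |Q| − 2·∑_{interior vertices x of Q} (β x − 1)`, where `|Q|` is the length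
(number of edges) of the walk `Q = x₁,…,x_r`, and the interior vertices are `x₂,…,x_{r−1}`. -/
def lamWalk {m : ℕ} (β : Fin m → ℕ) (Q : List (Fin m)) : ℤ :=
  ((Q.length : ℤ) - 1) - 2 * (((Q.drop 1).dropLast).map (fun x => (β x : ℤ) - 1)).sum

/-- Looping walks of `G` (with respect to the quantification order `<` on `Fin m`):
a walk `x₁,…,x_r` with `x₁ ≠ x_r` such that if `r ≥ 3` then both endpoints strictly precede
every interior vertex and the walk splits at some interior position into two looping walks. -/
inductive IsLoopingWalk {m : ℕ} (G : SimpleGraph (Fin m)) : List (Fin m) → Prop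
  | base {x y : Fin m} : G.Adj x y → IsLoopingWalk G [x, y]
  | comb {x y z : Fin m} {Q₁ Q₂ : List (Fin m)} :
      IsLoopingWalk G (x :: (Q₁ ++ [y])) →
      IsLoopingWalk G (y :: (Q₂ ++ [z])) →
      x ≠ z →
      (∀ w ∈ Q₁ ++ y :: Q₂, x < w ∧ z < w) →
      IsLoopingWalk G (x :: (Q₁ ++ y :: Q₂ ++ [z]))

/-- `Q` is a looping walk between `u` and `v` (in either direction). -/
def LoopingWalkBetween {m : ℕ} (G : SimpleGraph (Fin m)) (u v : Fin m)
    (Q : List (Fin m)) : Prop :=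
  IsLoopingWalk G Q ∧
    ((Q.head? = some u ∧ Q.getLast? = some v) ∨ (Q.head? = some v ∧ Q.getLast? = some u))

/-- `IsDelta G β u v d` : `d = δ(u,v)`, i.e. `d` is the minimum of `λ(Q)` over all looping
walks `Q` of `G` between `u` and `v`.  (`δ(u,v) < ∞` corresponds to `∃ d, IsDelta G β u v d`.) -/
def IsDelta {m : ℕ} (G : SimpleGraph (Fin m)) (β : Fin m → ℕ) (u v : Fin m) (d : ℤ) : Prop :=
  (∃ Q, LoopingWalkBetween G u v Q ∧ lamWalk β Q = d) ∧
    ∀ Q, LoopingWalkBetween G u v Q → d ≤ lamWalk β Q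

/-! ## The functions γ and γ′ -/

/-- `IsGammaVal G β g v t` : `t = max(0, max_{u ≺ v, δ(u,v) < ∞} (g u − δ(u,v) + β v − 1))`. -/
def IsGammaVal {m : ℕ} (G : SimpleGraph (Fin m)) (β : Fin m → ℕ) (g : Fin m → ℤ)
    (v : Fin m) (t : ℤ) : Prop :=
  0 ≤ t ∧
  (∀ u, u < v → ∀ d, IsDelta G β u v d → g u - d + (β v : ℤ) - 1 ≤ t) ∧
  (t = 0 ∨ ∃ u, u < v ∧ ∃ d, IsDelta G β u v d ∧ t = g u - d + (β v : ℤ) - 1)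

/-- `g` is the function `γ`: `γ(v) = 0` for the `≺`-least vertex, and otherwise
`γ(v) = β(v) − 1 + max(0, max_{u ≺ v, δ(u,v) < ∞} (γ(u) − δ(u,v) + β(v) − 1))`. -/
def IsGamma {m : ℕ} (G : SimpleGraph (Fin m)) (β : Fin m → ℕ) (g : Fin m → ℤ) : Prop :=
  ∀ v : Fin m,
    if (v : ℕ) = 0 then g v = 0
    else ∃ t, IsGammaVal G β g v t ∧ g v = (β v : ℤ) - 1 + t

/-- `g` is the function `γ′`:
`γ′(v) = β(v) − 1 + max(0, max_{u ≺ v, δ(u,v) < ∞} (γ′(u) − δ(u,v) + β(v) − 1))`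
(so `γ′(v) = β(v) − 1` for the `≺`-least vertex). -/
def IsGamma' {m : ℕ} (G : SimpleGraph (Fin m)) (β : Fin m → ℕ) (g : Fin m → ℤ) : Prop :=
  ∀ v : Fin m, ∃ t, IsGammaVal G β g v t ∧ g v = (β v : ℤ) - 1 + t

/-! ## The closure sets (F, R⁺, R⁻) for the {2}-CSP(K₄) algorithm -/

mutual
/-- Membership in the closure set `F` of pairs (initialised as the edge set of `G`). -/
inductive InF {m : ℕ} (G : SimpleGraph (Fin m)) : Finset (Fin m) → Prop
  | edge {x y : Fin m} : G.Adj x y → InF G {x, y}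
  | x3a {x y w z : Fin m} : [x, y, w, z].Pairwise (· ≠ ·) →
      x < z → y < z → w < z → ¬(x < w ∧ y < w) →
      InF G {w, z} → InRp G {x, y, z} → InF G {x, w}
  | x3b {x y w z : Fin m} : [x, y, w, z].Pairwise (· ≠ ·) →
      x < z → y < z → w < z → ¬(x < w ∧ y < w) →
      InF G {w, z} → InRp G {x, y, z} → InF G {y, w}
  | x4 {x y w z : Fin m} : [x, y, w, z].Pairwise (· ≠ ·) →
      x < y → w < y → y < z →
      InRp G {x, y, z} → InRm G {w, y, z} → InF G {x, w}
  | x7a {x y q w z : Fin m} : [x, y, q, w, z].Pairwise (· ≠ ·) →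
      x < q → y < q → w < q → q < z → ¬(x < w ∧ y < w) →
      InRp G {x, y, z} → InRm G {w, q, z} → InF G {x, w}
  | x7a' {x y q w z : Fin m} : [x, y, q, w, z].Pairwise (· ≠ ·) →
      x < q → y < q → w < q → q < z → ¬(x < w ∧ y < w) →
      InRm G {x, y, z} → InRp G {w, q, z} → InF G {x, w}
  | x7b {x y q w z : Fin m} : [x, y, q, w, z].Pairwise (· ≠ ·) →
      x < q → y < q → w < q → q < z → ¬(x < w ∧ y < w) →
      InRp G {x, y, z} → InRm G {w, q, z} → InF G {y, w}
  | x7b' {x y q w z : Fin m} : [x, y, q, w, z].Pairwise (· ≠ ·) →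
      x < q → y < q → w < q → q < z → ¬(x < w ∧ y < w) →
      InRm G {x, y, z} → InRp G {w, q, z} → InF G {y, w}

/-- Membership in the closure set `R⁺` of triples. -/
inductive InRp {m : ℕ} (G : SimpleGraph (Fin m)) : Finset (Fin m) → Prop
  | x2 {x y w z : Fin m} : [x, y, w, z].Pairwise (· ≠ ·) →
      x < z → y < z → w < z →
      InF G {w, z} → InRm G {x, y, z} → InRp G {x, y, w}
  | x4 {x y w z : Fin m} : [x, y, w, z].Pairwise (· ≠ ·) →
      x < y → w < y → y < z →
      InRp G {x, y, z} → InRm G {w, y, z} → InRp G {x, y, w}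
  | x5p {x y w z : Fin m} : [x, y, w, z].Pairwise (· ≠ ·) →
      x < z → y < z → w < z →
      InRp G {x, y, z} → InRp G {w, y, z} → InRp G {x, y, w}
  | x5m {x y w z : Fin m} : [x, y, w, z].Pairwise (· ≠ ·) →
      x < z → y < z → w < z →
      InRm G {x, y, z} → InRm G {w, y, z} → InRp G {x, y, w}
  | x6ap {x y q w z : Fin m} : [x, y, q, w, z].Pairwise (· ≠ ·) →
      x < q → y < q → w < q → q < z →
      InRp G {x, y, z} → InRp G {w, q, z} → InRp G {x, y, w}
  | x6am {x y q w z : Fin m} : [x, y, q, w, z].Pairwise (· ≠ ·) →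
      x < q → y < q → w < q → q < z →
      InRm G {x, y, z} → InRm G {w, q, z} → InRp G {x, y, w}
  | x6bp {x y q w z : Fin m} : [x, y, q, w, z].Pairwise (· ≠ ·) →
      x < q → y < q → w < q → q < z →
      InRp G {x, y, z} → InRp G {w, q, z} → InRp G {x, y, q}
  | x6bm {x y q w z : Fin m} : [x, y, q, w, z].Pairwise (· ≠ ·) →
      x < q → y < q → w < q → q < z →
      InRm G {x, y, z} → InRm G {w, q, z} → InRp G {x, y, q}

/-- Membership in the closure set `R⁻` of triples. -/
inductive InRm {m : ℕ} (G : SimpleGraph (Fin m)) : Finset (Fin m) → Prop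
  | x1 {x y z : Fin m} : [x, y, z].Pairwise (· ≠ ·) →
      x < z → y < z →
      InF G {x, z} → InF G {y, z} → InRm G {x, y, z}
  | x3 {x y w z : Fin m} : [x, y, w, z].Pairwise (· ≠ ·) →
      x < z → y < z → w < z → x < w → y < w →
      InF G {w, z} → InRp G {x, y, z} → InRm G {x, y, w}
  | x7a {x y q w z : Fin m} : [x, y, q, w, z].Pairwise (· ≠ ·) →
      x < q → y < q → w < q → q < z →
      InRp G {x, y, z} → InRm G {w, q, z} → InRm G {x, y, q}
  | x7a' {x y q w z : Fin m} : [x, y, q, w, z].Pairwise (· ≠ ·) →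
      x < q → y < q → w < q → q < z →
      InRm G {x, y, z} → InRp G {w, q, z} → InRm G {x, y, q}
  | x7b {x y q w z : Fin m} : [x, y, q, w, z].Pairwise (· ≠ ·) →
      x < q → y < q → w < q → q < z → x < w → y < w →
      InRp G {x, y, z} → InRm G {w, q, z} → InRm G {x, y, w}
  | x7b' {x y q w z : Fin m} : [x, y, q, w, z].Pairwise (· ≠ ·) →
      x < q → y < q → w < q → q < z → x < w → y < w →
      InRm G {x, y, z} → InRp G {w, q, z} → InRm G {x, y, w}
end


section Aux
variable {m : ℕ} {G : SimpleGraph (Fin m)} {β : Fin m → ℕ}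

lemma lamWalk_concat (β : Fin m → ℕ) (x y : Fin m) (A : List (Fin m)) :
    lamWalk β (x :: (A ++ [y])) =
      ((A.length : ℤ) + 1) - 2 * (A.map (fun t => (β t : ℤ) - 1)).sum := by
  simp [lamWalk]

lemma lamWalk_comb (β : Fin m → ℕ) (x y z : Fin m) (A B : List (Fin m)) :
    lamWalk β (x :: (A ++ y :: B ++ [z])) =
      lamWalk β (x :: (A ++ [y])) + lamWalk β (y :: (B ++ [z])) - 2 * ((β y : ℤ) - 1) := by
  have e : x :: (A ++ y :: B ++ [z]) = x :: ((A ++ y :: B) ++ [z]) := by simp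
  rw [e, lamWalk_concat, lamWalk_concat, lamWalk_concat]
  simp
  ring

lemma loopingWalk_shape {Q : List (Fin m)} (h : IsLoopingWalk G Q) :
    ∃ (x : Fin m) (L : List (Fin m)) (z : Fin m),
      Q = x :: (L ++ [z]) ∧ x ≠ z ∧ ∀ t ∈ L, x < t ∧ z < t := by
  induction h with
  | base hadj => exact ⟨_, [], _, rfl, hadj.ne, by simp⟩
  | @comb x y z Q₁ Q₂ h1 h2 hxz hlt ih1 ih2 =>
      exact ⟨x, Q₁ ++ y :: Q₂, z, by simp, hxz, hlt⟩

lemma IsLoopingWalk.rev {Q : List (Fin m)} (h : IsLoopingWalk G Q) :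
    IsLoopingWalk G Q.reverse := by
  induction h with
  | base hadj => simpa using IsLoopingWalk.base hadj.symm
  | @comb x y z Q₁ Q₂ h1 h2 hxz hlt ih1 ih2 =>
      have e1 : (x :: (Q₁ ++ [y])).reverse = y :: (Q₁.reverse ++ [x]) := by simp
      have e2 : (y :: (Q₂ ++ [z])).reverse = z :: (Q₂.reverse ++ [y]) := by simp
      rw [e1] at ih1; rw [e2] at ih2
      have e : (x :: (Q₁ ++ y :: Q₂ ++ [z])).reverse
          = z :: (Q₂.reverse ++ y :: Q₁.reverse ++ [x]) := by simp
      rw [e]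
      refine IsLoopingWalk.comb ih2 ih1 hxz.symm ?_
      intro t ht
      have : t ∈ Q₁ ++ y :: Q₂ := by
        simp only [List.mem_append, List.mem_cons, List.mem_reverse] at ht ⊢
        tauto
      exact ⟨(hlt t this).2, (hlt t this).1⟩

lemma lamWalk_reverse {Q : List (Fin m)} (h : IsLoopingWalk G Q) :
    lamWalk β Q.reverse = lamWalk β Q := by
  obtain ⟨x, L, z, rfl, -, -⟩ := loopingWalk_shape h
  have e : (x :: (L ++ [z])).reverse = z :: (L.reverse ++ [x]) := by simp
  rw [e, lamWalk_concat, lamWalk_concat]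
  simp [List.sum_reverse]

lemma lamWalk_parity (c : Fin m → Bool) (hc : ∀ a b, G.Adj a b → c a ≠ c b)
    {Q : List (Fin m)} (h : IsLoopingWalk G Q) :
    ∀ x z : Fin m, Q.head? = some x → Q.getLast? = some z →
      lamWalk β Q % 2 = (if c x = c z then 0 else 1) := by
  induction h with
  | @base a b hadj =>
      intro x z hx hz
      simp at hx hz
      subst hx; subst hz
      have h1 : lamWalk β [a, b] = 1 := by simp [lamWalk]
      rw [h1]
      simp [hc a b hadj]
  | @comb a y0 b Q₁ Q₂ h1 h2 hxz hlt ih1 ih2 =>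
      intro x z hx hz
      have hx' : x = a := by simpa using hx.symm
      have hz' : z = b := by
        have e : a :: (Q₁ ++ y0 :: Q₂ ++ [b]) = (a :: (Q₁ ++ y0 :: Q₂)) ++ [b] := by simp
        rw [e, List.getLast?_concat] at hz
        simpa using hz.symm
      rw [hx', hz']
      have p1 := ih1 a y0 (by simp) (by
        have e : a :: (Q₁ ++ [y0]) = (a :: Q₁) ++ [y0] := by simp
        rw [e, List.getLast?_concat])
      have p2 := ih2 y0 b (by simp) (by
        have e : y0 :: (Q₂ ++ [b]) = (y0 :: Q₂) ++ [b] := by simp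
        rw [e, List.getLast?_concat])
      rw [lamWalk_comb]
      cases hu : c a <;> cases hv : c y0 <;> cases hw : c b <;>
        simp [hu, hv, hw] at p1 p2 ⊢ <;> omega

lemma lamWalk_lower (hβ : ∀ v, β v ≤ 2) {Q : List (Fin m)} (h : IsLoopingWalk G Q) :
    ∀ x z : Fin m, Q.head? = some x → Q.getLast? = some z →
      (2 : ℤ) - 2 ^ (m - max (x : ℕ) (z : ℕ)) ≤ lamWalk β Q := by
  induction h with
  | @base a b hadj =>
      intro x z hx hz
      simp at hx hz
      subst hx; subst hz
      have h1 : lamWalk β [a, b] = 1 := by simp [lamWalk]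
      rw [h1]
      have h2 : (1 : ℤ) ≤ 2 ^ (m - max (a : ℕ) (b : ℕ)) := one_le_pow₀ (by norm_num : (1:ℤ) ≤ 2)
      linarith
  | @comb a y0 b Q₁ Q₂ h1 h2 hxz hlt ih1 ih2 =>
      intro x z hx hz
      have hx' : x = a := by simpa using hx.symm
      have hz' : z = b := by
        have e : a :: (Q₁ ++ y0 :: Q₂ ++ [b]) = (a :: (Q₁ ++ y0 :: Q₂)) ++ [b] := by simp
        rw [e, List.getLast?_concat] at hz
        simpa using hz.symm
      rw [hx', hz']
      have hy := hlt y0 (by simp)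
      have hxy : (a : ℕ) < (y0 : ℕ) := hy.1
      have hzy : (b : ℕ) < (y0 : ℕ) := hy.2
      have p1 := ih1 a y0 (by simp) (by
        have e : a :: (Q₁ ++ [y0]) = (a :: Q₁) ++ [y0] := by simp
        rw [e, List.getLast?_concat])
      have p2 := ih2 y0 b (by simp) (by
        have e : y0 :: (Q₂ ++ [b]) = (y0 :: Q₂) ++ [b] := by simp
        rw [e, List.getLast?_concat])
      rw [lamWalk_comb]
      have e1 : max (a : ℕ) (y0 : ℕ) = (y0 : ℕ) := Nat.max_eq_right hxy.le
      have e2 : max (y0 : ℕ) (b : ℕ) = (y0 : ℕ) := Nat.max_eq_left hzy.le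
      rw [e1] at p1; rw [e2] at p2
      have hym : (y0 : ℕ) < m := y0.isLt
      have hmon : (2 : ℤ) ^ (m - (y0 : ℕ) + 1) ≤ 2 ^ (m - max (a : ℕ) (b : ℕ)) := by
        apply pow_le_pow_right₀ (by norm_num)
        omega
      have hβy : (β y0 : ℤ) ≤ 2 := by exact_mod_cast hβ y0
      have hsp : (2 : ℤ) ^ (m - (y0 : ℕ) + 1) = 2 ^ (m - (y0 : ℕ)) + 2 ^ (m - (y0 : ℕ)) := by
        ring
      linarith

lemma between_norm {u w : Fin m} {Q : List (Fin m)}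
    (h : LoopingWalkBetween G u w Q) :
    ∃ Q', IsLoopingWalk G Q' ∧ Q'.head? = some u ∧ Q'.getLast? = some w ∧
      lamWalk β Q' = lamWalk β Q := by
  obtain ⟨hQ, hends⟩ := h
  rcases hends with ⟨hh, hl⟩ | ⟨hh, hl⟩
  · exact ⟨Q, hQ, hh, hl, rfl⟩
  · exact ⟨Q.reverse, hQ.rev, by rwa [List.head?_reverse],
      by rwa [List.getLast?_reverse], lamWalk_reverse hQ⟩

end Aux

/-- If `G` is bipartite, `u ≠ v`, `u ≺ w`, `v ≺ w` and `δ(u,w)`, `δ(v,w)`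
are both finite, then `δ(u,v)` is finite and `δ(u,v) + δ(u,w) + δ(v,w)` is even. -/
theorem delta_parity {m : ℕ} (β : Fin m → ℕ) (hβ : ∀ v, β v = 1 ∨ β v = 2)
    (G : SimpleGraph (Fin m)) (hbip : Bipartite G) (u v w : Fin m)
    (huv : u ≠ v) (huw : u < w) (hvw : v < w)
    (d₁ d₂ : ℤ) (h₁ : IsDelta G β u w d₁) (h₂ : IsDelta G β v w d₂) :
    ∃ d : ℤ, IsDelta G β u v d ∧ Even (d + d₁ + d₂) := by
  classical
  obtain ⟨c, hc⟩ := hbip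
  have hβ2 : ∀ t, β t ≤ 2 := fun t => by rcases hβ t with h | h <;> omega
  obtain ⟨Q₁, hQ₁b, hQ1l⟩ := h₁.1
  obtain ⟨Qa, hQa, hau, haw, hla⟩ := between_norm (β := β) hQ₁b
  obtain ⟨Q₂, hQ₂b, hQ2l⟩ := h₂.1
  have hQ₂b' : LoopingWalkBetween G w v Q₂ := ⟨hQ₂b.1, hQ₂b.2.symm⟩
  obtain ⟨Qb, hQb, hbw, hbv, hlb⟩ := between_norm (β := β) hQ₂b'
  obtain ⟨x, A, z, hQaEq, hxzA, hA⟩ := loopingWalk_shape hQa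
  have hx : u = x := by rw [hQaEq] at hau; simpa using hau.symm
  have hz : w = z := by
    rw [hQaEq] at haw
    have e : x :: (A ++ [z]) = (x :: A) ++ [z] := by simp
    rw [e, List.getLast?_concat] at haw
    simpa using haw.symm
  subst hx; subst hz
  obtain ⟨x', B, z', hQbEq, hxzB, hB⟩ := loopingWalk_shape hQb
  have hx' : w = x' := by rw [hQbEq] at hbw; simpa using hbw.symm
  have hz' : v = z' := by
    rw [hQbEq] at hbv
    have e : x' :: (B ++ [z']) = (x' :: B) ++ [z'] := by simp
    rw [e, List.getLast?_concat] at hbv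
    simpa using hbv.symm
  subst hx'; subst hz'
  rw [hQaEq] at hQa
  rw [hQbEq] at hQb
  have hcombW : IsLoopingWalk G (u :: (A ++ w :: B ++ [v])) := by
    refine IsLoopingWalk.comb hQa hQb huv ?_
    intro t ht
    rcases List.mem_append.mp ht with h | h
    · exact ⟨(hA t h).1, lt_trans hvw (hA t h).2⟩
    · rcases List.mem_cons.mp h with rfl | h
      · exact ⟨huw, hvw⟩
      · exact ⟨lt_trans huw (hB t h).1, (hB t h).2⟩
  have hbtw : LoopingWalkBetween G u v (u :: (A ++ w :: B ++ [v])) := by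
    refine ⟨hcombW, Or.inl ⟨rfl, ?_⟩⟩
    have e : u :: (A ++ w :: B ++ [v]) = (u :: (A ++ w :: B)) ++ [v] := by simp
    rw [e, List.getLast?_concat]
  have hbdd : ∀ t : ℤ, (∃ Q, LoopingWalkBetween G u v Q ∧ lamWalk β Q = t) →
      (2 : ℤ) - 2 ^ m ≤ t := by
    rintro t ⟨Q, ⟨hQ, hends⟩, rfl⟩
    have key : ∀ a b : Fin m, Q.head? = some a → Q.getLast? = some b →
        (2 : ℤ) - 2 ^ m ≤ lamWalk β Q := by
      intro a b hh hl
      have h1 := lamWalk_lower hβ2 hQ a b hh hl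
      have h2 : (2 : ℤ) ^ (m - max (a : ℕ) (b : ℕ)) ≤ 2 ^ m :=
        pow_le_pow_right₀ (by norm_num) (Nat.sub_le _ _)
      linarith
    rcases hends with ⟨hh, hl⟩ | ⟨hh, hl⟩
    · exact key u v hh hl
    · exact key v u hh hl
  obtain ⟨d, ⟨Qm, hQmB, hQml⟩, hmin⟩ :=
    Int.exists_least_of_bdd ⟨(2 : ℤ) - 2 ^ m, hbdd⟩ ⟨_, _, hbtw, rfl⟩
  have hd : IsDelta G β u v d := ⟨⟨Qm, hQmB, hQml⟩, fun Q hQ => hmin _ ⟨Q, hQ, rfl⟩⟩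
  have par : ∀ (a b : Fin m) (dd : ℤ), IsDelta G β a b dd →
      dd % 2 = (if c a = c b then 0 else 1) := by
    rintro a b dd ⟨⟨Q, ⟨hQ, hends⟩, rfl⟩, -⟩
    rcases hends with ⟨hh, hl⟩ | ⟨hh, hl⟩
    · exact lamWalk_parity c hc hQ a b hh hl
    · rw [lamWalk_parity c hc hQ b a hh hl]
      by_cases hab : c a = c b
      · simp [hab]
      · rw [if_neg hab, if_neg (fun h => hab h.symm)]
  have e0 := par u v d hd
  have e1 := par u w d₁ h₁
  have e2 := par v w d₂ h₂
  refine ⟨d, hd, ?_⟩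
  rw [Int.even_iff]
  cases hcu : c u <;> cases hcv : c v <;> cases hcw : c w <;>
    simp [hcu, hcv, hcw] at e0 e1 e2 <;> omega


end CountingCSP
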